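/- If G is a class 2 graph (χ'(G) = Δ(G)+1), then vs_{χ'}(G) = min{ vs_Δ(G), vs_{class}(G) }. -/

import Mathlib

open SimpleGraph

open scoped Classical ENNReal

/-- `H` is (isomorphic to) a subgraph of `G`. -/
def IsSubgraphOf {α β : Type} (H : SimpleGraph α) (G : SimpleGraph β) : Prop :=
  ∃ f : α ↪ β, ∀ u v : α, H.Adj u v → G.Adj (f u) (f v)

/-- The `ρ`-vertex stability number of `G`: the minimum number of vertices of `G`
whose removal results in a graph `H ⊆ G` with `ρ H ≠ ρ G` or with no edges. -/
noncomputable def vsNum {V : Type} [Fintype V] [DecidableEq V]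
    (ρ : ∀ (W : Type) [Fintype W] [DecidableEq W], SimpleGraph W → ℝ≥0∞)
    (G : SimpleGraph V) : ℕ :=
  sInf {n | ∃ S : Finset V, S.card = n ∧
    (ρ _ (G.induce (↑Sᶜ : Set V)) ≠ ρ _ G ∨ (G.induce (↑Sᶜ : Set V)).edgeSet = ∅)}

/-- `ρ` is monotone increasing: `H ⊆ G` implies `ρ H ≤ ρ G`. -/
def MonotoneIncrInv
    (ρ : ∀ (W : Type) [Fintype W] [DecidableEq W], SimpleGraph W → ℝ≥0∞) : Prop :=
  ∀ (α β : Type) [Fintype α] [DecidableEq α] [Fintype β] [DecidableEq β]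
    (H : SimpleGraph α) (G : SimpleGraph β), IsSubgraphOf H G → ρ _ H ≤ ρ _ G

/-- `ρ` is monotone decreasing: `H ⊆ G` implies `ρ H ≥ ρ G`. -/
def MonotoneDecrInv
    (ρ : ∀ (W : Type) [Fintype W] [DecidableEq W], SimpleGraph W → ℝ≥0∞) : Prop :=
  ∀ (α β : Type) [Fintype α] [DecidableEq α] [Fintype β] [DecidableEq β]
    (H : SimpleGraph α) (G : SimpleGraph β), IsSubgraphOf H G → ρ _ G ≤ ρ _ H

/-- `ρ` is maxing: for disjoint graphs, `ρ (H₁ ∪ H₂) = max (ρ H₁) (ρ H₂)`. -/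
def MaxingInv
    (ρ : ∀ (W : Type) [Fintype W] [DecidableEq W], SimpleGraph W → ℝ≥0∞) : Prop :=
  ∀ (α β : Type) [Fintype α] [DecidableEq α] [Fintype β] [DecidableEq β]
    (G : SimpleGraph α) (H : SimpleGraph β), ρ _ (G ⊕g H) = max (ρ _ G) (ρ _ H)

/-- The chromatic index: minimum number of colors in a proper edge coloring. -/
noncomputable def chromIndex {V : Type} (G : SimpleGraph V) : ℕ :=
  sInf {k | ∃ c : G.edgeSet → Fin k, ∀ e₁ e₂ : G.edgeSet, e₁ ≠ e₂ →
    (∃ v, v ∈ (e₁ : Sym2 V) ∧ v ∈ (e₂ : Sym2 V)) → c e₁ ≠ c e₂}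

/-- Maximum degree. -/
noncomputable def maxDeg {V : Type} [Fintype V] (G : SimpleGraph V) : ℕ :=
  Finset.univ.sup fun v => (G.neighborSet v).ncard

/-- Minimum degree. -/
noncomputable def minDeg {V : Type} [Fintype V] (G : SimpleGraph V) : ℕ :=
  sInf {d | ∃ v, (G.neighborSet v).ncard = d}

/-- The chromatic vertex stability number `vs_{χ'}(G)`. -/
noncomputable def vsChi {V : Type} [Fintype V] [DecidableEq V] (G : SimpleGraph V) : ℕ :=
  if G.edgeSet = ∅ then 0 else
    sInf {n | ∃ S : Finset V, S.card = n ∧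
      chromIndex (G.induce (↑Sᶜ : Set V)) ≠ chromIndex G}

/-- The `Δ`-vertex stability number `vs_Δ(G)`. -/
noncomputable def vsDelta {V : Type} [Fintype V] [DecidableEq V] (G : SimpleGraph V) : ℕ :=
  sInf {n | ∃ S : Finset V, S.card = n ∧
    (maxDeg (G.induce (↑Sᶜ : Set V)) ≠ maxDeg G ∨ (G.induce (↑Sᶜ : Set V)).edgeSet = ∅)}

/-- The `δ`-vertex stability number `vs_δ(G)`. -/
noncomputable def vsMinDeg {V : Type} [Fintype V] [DecidableEq V] (G : SimpleGraph V) : ℕ :=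
  sInf {n | ∃ S : Finset V, S.card = n ∧
    (minDeg (G.induce (↑Sᶜ : Set V)) ≠ minDeg G ∨ (G.induce (↑Sᶜ : Set V)).edgeSet = ∅)}

/-- `class G = χ'(G) - Δ(G) + 1 ∈ {1,2}`. -/
noncomputable def classInv {V : Type} [Fintype V] (G : SimpleGraph V) : ℕ :=
  chromIndex G - maxDeg G + 1

/-- The `class`-vertex stability number. -/
noncomputable def vsClass {V : Type} [Fintype V] [DecidableEq V] (G : SimpleGraph V) : ℕ :=
  sInf {n | ∃ S : Finset V, S.card = n ∧
    (classInv (G.induce (↑Sᶜ : Set V)) ≠ classInv G ∨ (G.induce (↑Sᶜ : Set V)).edgeSet = ∅)}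

/-- Number of connected components. -/
noncomputable def numComponents {V : Type} (G : SimpleGraph V) : ℕ :=
  Nat.card G.ConnectedComponent

/-- The `ω`-vertex stability number (ω = number of components). -/
noncomputable def vsOmega {V : Type} [Fintype V] [DecidableEq V] (G : SimpleGraph V) : ℕ :=
  sInf {n | ∃ S : Finset V, S.card = n ∧
    (numComponents (G.induce (↑Sᶜ : Set V)) ≠ numComponents G ∨
      (G.induce (↑Sᶜ : Set V)).edgeSet = ∅)}

/-- Vertex connectivity: minimum number of vertices whose removal yields a graph that is
not connected, or the single-vertex graph `K₁`. -/
noncomputable def kappa {V : Type} [Fintype V] [DecidableEq V] (G : SimpleGraph V) : ℕ :=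
  sInf {n | ∃ S : Finset V, S.card = n ∧
    (¬ (G.induce (↑Sᶜ : Set V)).Connected ∨ Fintype.card ↥(↑Sᶜ : Set V) = 1)}

/-- `γ(V_Δ)`: minimum size of a set `Γ` of vertices such that every vertex of maximum
degree has a neighbor in `Γ`. -/
noncomputable def gammaMaxDeg {V : Type} [Fintype V] [DecidableEq V] (G : SimpleGraph V) : ℕ :=
  sInf {n | ∃ Γ : Finset V, Γ.card = n ∧
    ∀ v : V, (G.neighborSet v).ncard = maxDeg G → ∃ u ∈ Γ, G.Adj u v}

/-- The wheel graph `W n`: cycle `C n` joined with one extra vertex. -/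
def wheelGraph (n : ℕ) : SimpleGraph (Option (Fin n)) :=
  SimpleGraph.fromRel (fun x y =>
    match x, y with
    | none, some _ => True
    | some i, some j => (j : ℕ) = ((i : ℕ) + 1) % n
    | _, _ => False)

-- ===== auxiliary development for Vizing =====
section VizingAux

open Sym2

variable {V : Type} [Fintype V]

/-- Partial proper edge coloring with colors `< k`, supported on edges of `G`. -/
def PC (G : SimpleGraph V) (k : ℕ) (f : Sym2 V → Option ℕ) : Prop :=
  (∀ e, (f e).isSome → e ∈ G.edgeSet) ∧
  (∀ e a, f e = some a → a < k) ∧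
  (∀ u v w : V, v ≠ w → (f s(u,v)).isSome → f s(u,v) ≠ f s(u,w))

/-- color `a` is unused at `v`. -/
def Fr (f : Sym2 V → Option ℕ) (v : V) (a : ℕ) : Prop := ∀ w, f s(v,w) ≠ some a

/-- `f` colors exactly the edges of `G` other than `e₀`. -/
def Miss (G : SimpleGraph V) (f : Sym2 V → Option ℕ) (e₀ : Sym2 V) : Prop :=
  f e₀ = none ∧ ∀ e ∈ G.edgeSet, e ≠ e₀ → (f e).isSome

section VizingCore

variable {V : Type} [Fintype V] {G : SimpleGraph V} {k : ℕ} {f : Sym2 V → Option ℕ}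

theorem exists_free (hdeg : ∀ v, (G.neighborSet v).ncard < k) (hf : PC G k f) (v : V) :
    ∃ a, a < k ∧ Fr f v a := by
  classical
  set N := (G.neighborSet v).toFinset with hN
  set img := N.image (fun w => (f s(v,w)).getD k) with himg
  have hcard : img.card < (Finset.range k).card := by
    rw [Finset.card_range]
    exact lt_of_le_of_lt (le_trans Finset.card_image_le (le_of_eq (by
      rw [hN, Set.ncard_eq_toFinset_card']))) (hdeg v)
  have hnsub : ¬ (Finset.range k) ⊆ img := fun h =>
    absurd (Finset.card_le_card h) (not_le.2 hcard)
  obtain ⟨a, ha, hna⟩ := Finset.not_subset.1 hnsub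
  refine ⟨a, Finset.mem_range.1 ha, fun w hw => hna ?_⟩
  have hws : (f s(v,w)).isSome := by rw [hw]; rfl
  have hwe : w ∈ N := by
    rw [hN, Set.mem_toFinset]
    exact (SimpleGraph.mem_edgeSet G).1 (hf.1 _ hws)
  exact Finset.mem_image.2 ⟨w, hwe, by rw [hw]; rfl⟩

theorem fill {x z : V} (hf : PC G k f) (hm : Miss G f s(x,z)) (hxz : G.Adj x z)
    {a : ℕ} (hak : a < k) (hax : Fr f x a) (haz : Fr f z a) :
    ∃ g, PC G k g ∧ ∀ e ∈ G.edgeSet, (g e).isSome := by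
  classical
  refine ⟨Function.update f s(x,z) (some a), ⟨?_, ?_, ?_⟩, ?_⟩
  · intro e he
    rcases eq_or_ne e s(x,z) with h | h
    · rw [h]; exact hxz
    · rw [Function.update_apply, if_neg h] at he; exact hf.1 e he
  · intro e b hb
    rcases eq_or_ne e s(x,z) with h | h
    · rw [Function.update_apply, if_pos h] at hb
      cases hb; exact hak
    · rw [Function.update_apply, if_neg h] at hb; exact hf.2.1 e b hb
  · intro u v w hvw hsome
    simp only [Function.update_apply] at hsome ⊢
    by_cases h1 : s(u,v) = s(x,z) <;> by_cases h2 : s(u,w) = s(x,z)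
    · exact absurd (h1.trans h2.symm) (fun hh => hvw (Sym2.congr_right.1 hh))
    · rw [if_pos h1, if_neg h2]
      rcases Sym2.eq_iff.1 h1 with ⟨hu, hv⟩ | ⟨hu, hv⟩
      · subst hu; exact fun hh => hax w hh.symm
      · subst hu; exact fun hh => haz w hh.symm
    · rw [if_neg h1, if_pos h2]
      rcases Sym2.eq_iff.1 h2 with ⟨hu, hw⟩ | ⟨hu, hw⟩
      · subst hu; exact fun hh => hax v hh
      · subst hu; exact fun hh => haz v hh
    · rw [if_neg h1] at hsome
      rw [if_neg h1, if_neg h2]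
      exact hf.2.2 u v w hvw hsome
  · intro e he
    rcases eq_or_ne e s(x,z) with h | h
    · rw [Function.update_apply, if_pos h]; rfl
    · rw [Function.update_apply, if_neg h]; exact hm.2 e he h

/-- One rotation step. -/
theorem rot_step {x y₀ y₁ : V} (hf : PC G k f) (hm : Miss G f s(x,y₀))
    (hxy₀ : G.Adj x y₀) (hxy₁ : G.Adj x y₁) (hne : y₀ ≠ y₁)
    {γ : ℕ} (hγ : f s(x,y₁) = some γ) (hFr : Fr f y₀ γ) :
    ∃ g, PC G k g ∧ Miss G g s(x,y₁) ∧
      (∀ e, e ≠ s(x,y₀) → e ≠ s(x,y₁) → g e = f e) ∧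
      (∀ a, Fr f x a → Fr g x a) ∧
      (∀ v, v ≠ x → v ≠ y₀ → ∀ a, Fr f v a → Fr g v a) := by
  classical
  have hxy0' : x ≠ y₀ := hxy₀.ne
  have hxy1' : x ≠ y₁ := hxy₁.ne
  have hee : s(x,y₀) ≠ s(x,y₁) := fun hh => hne (Sym2.congr_right.1 hh)
  set g : Sym2 V → Option ℕ :=
    Function.update (Function.update f s(x,y₀) (some γ)) s(x,y₁) none with hg
  have heval : ∀ e, e ≠ s(x,y₀) → e ≠ s(x,y₁) → g e = f e := by
    intro e h0 h1
    rw [hg, Function.update_apply, if_neg h1, Function.update_apply, if_neg h0]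
  have heval0 : g s(x,y₀) = some γ := by
    rw [hg, Function.update_apply, if_neg hee, Function.update_apply, if_pos rfl]
  have heval1 : g s(x,y₁) = none := by
    rw [hg, Function.update_apply, if_pos rfl]
  -- evaluation at edges incident to a vertex
  have hevalv : ∀ u v, g s(u,v) = some γ → s(u,v) = s(x,y₀) ∨ f s(u,v) = some γ := by
    intro u v h
    by_cases h0 : s(u,v) = s(x,y₀)
    · exact Or.inl h0
    · by_cases h1 : s(u,v) = s(x,y₁)
      · rw [h1, heval1] at h; exact absurd h (by simp)
      · rw [heval _ h0 h1] at h; exact Or.inr h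
  refine ⟨g, ⟨?_, ?_, ?_⟩, ⟨heval1, ?_⟩, heval, ?_, ?_⟩
  · -- support
    intro e he
    by_cases h0 : e = s(x,y₀)
    · rw [h0]; exact hxy₀
    · by_cases h1 : e = s(x,y₁)
      · rw [h1, heval1] at he; exact absurd he (by simp)
      · rw [heval e h0 h1] at he; exact hf.1 e he
  · -- bound
    intro e b hb
    by_cases h0 : e = s(x,y₀)
    · rw [h0, heval0] at hb; cases hb; exact hf.2.1 _ _ hγ
    · by_cases h1 : e = s(x,y₁)
      · rw [h1, heval1] at hb; exact absurd hb (by simp)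
      · rw [heval e h0 h1] at hb; exact hf.2.1 e b hb
  · -- properness
    intro u v w hvw hsome heq
    obtain ⟨c, hc⟩ := Option.isSome_iff_exists.1 hsome
    rw [hc] at heq
    have hcw : g s(u,w) = some c := heq.symm
    by_cases h0 : s(u,v) = s(x,y₀) <;> by_cases h2 : s(u,w) = s(x,y₀)
    · exact hvw (Sym2.congr_right.1 (h0.trans h2.symm))
    · -- s(u,v) is the new γ edge
      rw [h0, heval0] at hc
      cases hc
      rcases hevalv u w hcw with h | h
      · exact h2 h
      · rcases Sym2.eq_iff.1 h0 with ⟨hu, hv⟩ | ⟨hu, hv⟩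
        · subst hu
          have hwy1 : w ≠ y₁ := by
            intro hh; subst hh
            rw [heval1] at hcw; exact absurd hcw (by simp)
          exact hf.2.2 _ y₁ w hwy1.symm (by rw [hγ]; rfl) (hγ.trans h.symm)
        · subst hu; exact hFr w h
    · rw [h2, heval0] at hcw
      cases hcw
      rcases hevalv u v hc with h | h
      · exact h0 h
      · rcases Sym2.eq_iff.1 h2 with ⟨hu, hw⟩ | ⟨hu, hw⟩
        · subst hu
          have hvy1 : v ≠ y₁ := by
            intro hh; subst hh
            rw [heval1] at hc; exact absurd hc (by simp)
          exact hf.2.2 _ y₁ v hvy1.symm (by rw [hγ]; rfl) (hγ.trans h.symm)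
        · subst hu; exact hFr v h
    · by_cases h1 : s(u,v) = s(x,y₁)
      · rw [h1, heval1] at hc; exact absurd hc (by simp)
      · by_cases h3 : s(u,w) = s(x,y₁)
        · rw [h3, heval1] at hcw; exact absurd hcw (by simp)
        · rw [heval _ h0 h1] at hc
          rw [heval _ h2 h3] at hcw
          exact hf.2.2 u v w hvw (by rw [hc]; rfl) (hc.trans hcw.symm)
  · -- Miss: all other edges colored
    intro e he hne1
    by_cases h0 : e = s(x,y₀)
    · rw [h0, heval0]; rfl
    · rw [heval e h0 hne1]
      exact hm.2 e he h0
  · -- Fr at x preserved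
    intro a ha w hw
    by_cases h0 : s(x,w) = s(x,y₀)
    · rw [h0, heval0] at hw
      cases hw
      exact ha y₁ hγ
    · by_cases h1 : s(x,w) = s(x,y₁)
      · rw [h1, heval1] at hw; exact absurd hw (by simp)
      · rw [heval _ h0 h1] at hw; exact ha w hw
  · -- Fr at other vertices preserved
    intro v hvx hvy₀ a ha w hw
    by_cases h0 : s(v,w) = s(x,y₀)
    · rcases Sym2.eq_iff.1 h0 with ⟨hu, _⟩ | ⟨hu, _⟩
      · exact hvx hu
      · exact hvy₀ hu
    · by_cases h1 : s(v,w) = s(x,y₁)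
      · rw [h1, heval1] at hw; exact absurd hw (by simp)
      · rw [heval _ h0 h1] at hw; exact ha w hw

end VizingCore
section VizingRotate

variable {V : Type} [Fintype V] {G : SimpleGraph V} {k : ℕ} {f : Sym2 V → Option ℕ}

theorem rotate {x : V} (hf : PC G k f) (L : List V) (hL : L ≠ [])
    (hnd : L.Nodup) (hadj : ∀ y ∈ L, G.Adj x y)
    (hchain : L.Chain' (fun a b => ∃ c, f s(x,b) = some c ∧ Fr f a c))
    (hm : Miss G f s(x, L.head hL)) :
    ∃ g, PC G k g ∧ Miss G g s(x, L.getLast hL) ∧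
      (∀ a, Fr f x a → Fr g x a) ∧ (∀ a, Fr f (L.getLast hL) a → Fr g (L.getLast hL) a) := by
  classical
  induction L generalizing f with
  | nil => exact absurd rfl hL
  | cons y₀ t ih =>
    cases t with
    | nil =>
      exact ⟨f, hf, hm, fun a ha => ha, fun a ha => ha⟩
    | cons y₁ rest =>
      obtain ⟨⟨γ, hγ, hFrγ⟩, hchain₂⟩ := List.isChain_cons_cons.1 hchain
      have hy₀t : y₀ ∉ y₁ :: rest := (List.nodup_cons.1 hnd).1
      have hnd' : (y₁ :: rest).Nodup := (List.nodup_cons.1 hnd).2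
      have hne01 : y₀ ≠ y₁ := fun h => hy₀t (h ▸ List.mem_cons_self)
      have hxy₀ : G.Adj x y₀ := hadj y₀ (List.mem_cons_self)
      have hxy₁ : G.Adj x y₁ := hadj y₁ (List.mem_cons_of_mem _ (List.mem_cons_self))
      obtain ⟨g₁, hg₁, hm₁, heval₁, hFrx₁, hFrv₁⟩ :=
        rot_step hf hm hxy₀ hxy₁ hne01 hγ hFrγ
      simp only [List.head_cons] at heval₁ hFrv₁
      have hadj' : ∀ y ∈ y₁ :: rest, G.Adj x y := fun y hy =>
        hadj y (List.mem_cons_of_mem _ hy)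
      have hchain' : (y₁ :: rest).Chain' (fun a b => ∃ c, g₁ s(x,b) = some c ∧ Fr g₁ a c) := by
        rw [List.isChain_iff_getElem] at hchain₂; rw [List.Chain', List.isChain_iff_getElem]
        intro i hi
        obtain ⟨c, hc, hFr⟩ := hchain₂ i hi
        have hbmem : (y₁ :: rest).get ⟨i+1, by omega⟩ ∈ y₁ :: rest := List.get_mem _ _
        have hamem : (y₁ :: rest).get ⟨i, by omega⟩ ∈ y₁ :: rest := List.get_mem _ _
        have hbne0 : (y₁ :: rest).get ⟨i+1, by omega⟩ ≠ y₀ := fun h => hy₀t (h ▸ hbmem)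
        have hbne1 : (y₁ :: rest).get ⟨i+1, by omega⟩ ≠ y₁ := by
          intro h
          have h0 : (y₁ :: rest).get ⟨0, by simp⟩ = y₁ := rfl
          exact absurd ((List.Nodup.get_inj_iff hnd').1 (h.trans h0.symm))
            (by simp [Fin.ext_iff])
        rw [List.get_eq_getElem] at hbne0 hbne1
        refine ⟨c, ?_, ?_⟩
        · rw [heval₁ _ (fun h => hbne0 (Sym2.congr_right.1 h))
            (fun h => hbne1 (Sym2.congr_right.1 h))]
          exact hc
        · exact hFrv₁ _ (hadj' _ hamem).ne' (fun h => hy₀t (h ▸ hamem)) c hFr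
      obtain ⟨g, hg, hmg, hFrx, hFrl⟩ := ih hg₁ (by simp) hnd' hadj' hchain' hm₁
      have hlast : (y₀ :: y₁ :: rest).getLast hL = (y₁ :: rest).getLast (by simp) :=
        List.getLast_cons _
      rw [hlast]
      have hlmem : (y₁ :: rest).getLast (by simp) ∈ y₁ :: rest := List.getLast_mem _
      refine ⟨g, hg, hmg, fun a ha => hFrx a (hFrx₁ a ha), fun a ha => hFrl a ?_⟩
      exact hFrv₁ _ (hadj' _ hlmem).ne' (fun h => hy₀t (h ▸ hlmem)) a ha

theorem rotate_fill {x : V} (hf : PC G k f) (L : List V) (hL : L ≠ [])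
    (hnd : L.Nodup) (hadj : ∀ y ∈ L, G.Adj x y)
    (hchain : L.Chain' (fun a b => ∃ c, f s(x,b) = some c ∧ Fr f a c))
    (hm : Miss G f s(x, L.head hL)) {a : ℕ} (hak : a < k)
    (hax : Fr f x a) (haz : Fr f (L.getLast hL) a) :
    ∃ g, PC G k g ∧ ∀ e ∈ G.edgeSet, (g e).isSome := by
  obtain ⟨g, hg, hmg, hFrx, hFrl⟩ := rotate hf L hL hnd hadj hchain hm
  exact fill hg hmg (hadj _ (List.getLast_mem hL)) hak (hFrx a hax) (hFrl a haz)

end VizingRotate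
section VizingKempe

variable {V : Type} [Fintype V] {G : SimpleGraph V} {k : ℕ} {f : Sym2 V → Option ℕ}

/-- The α/β subgraph. -/
def abG (G : SimpleGraph V) (f : Sym2 V → Option ℕ) (α β : ℕ) : SimpleGraph V where
  Adj a b := G.Adj a b ∧ (f s(a,b) = some α ∨ f s(a,b) = some β)
  symm := by
    refine ⟨fun a b h => ?_⟩
    refine ⟨h.1.symm, ?_⟩
    rw [Sym2.eq_swap]
    exact h.2
  loopless := ⟨fun a h => G.loopless.irrefl a h.1⟩

variable {α β : ℕ}

theorem abG_unique {v : V} (hf : PC G k f) (hv : Fr f v α ∨ Fr f v β) :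
    ∀ a b, (abG G f α β).Adj v a → (abG G f α β).Adj v b → a = b := by
  intro a b ha hb
  by_contra hab
  have hprop := hf.2.2 v a b hab (by rcases ha.2 with h | h <;> rw [h] <;> rfl)
  rcases hv with hv | hv
  · rcases ha.2 with h1 | h1
    · exact hv a h1
    · rcases hb.2 with h2 | h2
      · exact hv b h2
      · exact hprop (h1.trans h2.symm)
  · rcases ha.2 with h1 | h1
    · rcases hb.2 with h2 | h2
      · exact hprop (h1.trans h2.symm)
      · exact hv b h2
    · exact hv a h1

theorem abG_two (hf : PC G k f) {v a b c : V} (hab : a ≠ b)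
    (ha : (abG G f α β).Adj v a) (hb : (abG G f α β).Adj v b)
    (hc : (abG G f α β).Adj v c) : c = a ∨ c = b := by
  by_contra hcon
  push_neg at hcon
  have h1 := hf.2.2 v a b hab (by rcases ha.2 with h | h <;> rw [h] <;> rfl)
  have h2 := hf.2.2 v c a hcon.1 (by rcases hc.2 with h | h <;> rw [h] <;> rfl)
  have h3 := hf.2.2 v c b hcon.2 (by rcases hc.2 with h | h <;> rw [h] <;> rfl)
  rcases ha.2 with e1 | e1 <;> rcases hb.2 with e2 | e2 <;> rcases hc.2 with e3 | e3 <;>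
    first
      | exact h1 (e1.trans e2.symm)
      | exact h2 (e3.trans e1.symm)
      | exact h3 (e3.trans e2.symm)

theorem mem_of_get {α : Type} {l : List α} {n : ℕ} (h : n < l.length) :
    l.get ⟨n, h⟩ ∈ l := List.mem_iff_get.2 ⟨_, rfl⟩

/-- In a graph of max degree ≤ 2, a nodup chain whose endpoints have unique neighbors
is closed under adjacency. -/
theorem chain_closed {M : SimpleGraph V}
    (htwo : ∀ v a b c : V, a ≠ b → M.Adj v a → M.Adj v b → M.Adj v c → c = a ∨ c = b)
    {l : List V} (hc : l.Chain' M.Adj) (hnd : l.Nodup) (hlen : 2 ≤ l.length)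
    (hhead : ∀ a b, M.Adj (l.get ⟨0, by omega⟩) a → M.Adj (l.get ⟨0, by omega⟩) b → a = b)
    (hlast : ∀ a b, M.Adj (l.get ⟨l.length - 1, by omega⟩) a →
      M.Adj (l.get ⟨l.length - 1, by omega⟩) b → a = b) :
    ∀ v ∈ l, ∀ u, M.Adj v u → u ∈ l := by
  intro v hv u hu
  obtain ⟨i, hi⟩ := List.mem_iff_get.1 hv
  rw [List.Chain', List.isChain_iff_getElem] at hc
  rcases Nat.eq_zero_or_pos i.val with h0 | h0
  · -- head
    have hadj : M.Adj (l.get ⟨0, by omega⟩) (l.get ⟨0+1, by omega⟩) := hc 0 (by omega)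
    have hieq : i = (⟨0, by omega⟩ : Fin l.length) := Fin.ext_iff.2 (by simpa using h0)
    rw [← hi, hieq] at hu
    rw [hhead u _ hu hadj]
    exact mem_of_get _
  · rcases eq_or_lt_of_le (by omega : i.val ≤ l.length - 1) with hL | hL
    · -- last
      have hadj : M.Adj (l.get ⟨l.length - 2, by omega⟩) (l.get ⟨l.length - 2 + 1, by omega⟩) :=
        hc (l.length - 2) (by omega)
      have hfeq : (⟨l.length - 2 + 1, by omega⟩ : Fin l.length) = ⟨l.length - 1, by omega⟩ :=
        Fin.ext_iff.2 (by simp; omega)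
      rw [hfeq] at hadj
      have hieq : i = (⟨l.length - 1, by omega⟩ : Fin l.length) := Fin.ext_iff.2 (by simp; omega)
      rw [← hi, hieq] at hu
      rw [hlast u _ hu hadj.symm]
      exact mem_of_get _
    · -- interior
      have hadj1 : M.Adj (l.get ⟨i.val - 1, by omega⟩) (l.get ⟨i.val - 1 + 1, by omega⟩) :=
        hc (i.val - 1) (by omega)
      have hfeq : (⟨i.val - 1 + 1, by omega⟩ : Fin l.length) = ⟨i.val, i.2⟩ :=
        Fin.ext_iff.2 (by simp; omega)
      rw [hfeq] at hadj1
      have hadj2 : M.Adj (l.get ⟨i.val, by omega⟩) (l.get ⟨i.val + 1, by omega⟩) :=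
        hc i.val (by omega)
      have hii : l.get ⟨i.val, i.2⟩ = v := hi
      rw [hii] at hadj1 hadj2
      have hne : l.get ⟨i.val - 1, by omega⟩ ≠ l.get ⟨i.val + 1, by omega⟩ := by
        intro h
        have h2 : i.val - 1 = i.val + 1 := by
          simpa [Fin.ext_iff] using (List.Nodup.get_inj_iff hnd).1 h
        omega
      rcases htwo v _ _ u hne.symm hadj2 hadj1.symm hu with h | h
      · rw [h]; exact mem_of_get _
      · rw [h]; exact mem_of_get _

theorem walk_mem_of_closed {M : SimpleGraph V} {l : List V}
    (hcl : ∀ v ∈ l, ∀ u, M.Adj v u → u ∈ l) {s t : V} (p : M.Walk s t) (hs : s ∈ l) :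
    t ∈ l := by
  induction p with
  | nil => exact hs
  | cons h q ih => exact ih (hcl _ hs _ h)

/-- Three distinct vertices with unique α/β-neighbors cannot all be connected. -/
theorem no_three {M : SimpleGraph V}
    (htwo : ∀ v a b c : V, a ≠ b → M.Adj v a → M.Adj v b → M.Adj v c → c = a ∨ c = b)
    {x z w : V}
    (hx : ∀ a b, M.Adj x a → M.Adj x b → a = b)
    (hz : ∀ a b, M.Adj z a → M.Adj z b → a = b)
    (hw : ∀ a b, M.Adj w a → M.Adj w b → a = b)
    (hzw : z ≠ w) (hxz : x ≠ z) (hxw : x ≠ w)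
    (h1 : M.Reachable z x) (h2 : M.Reachable w x) : False := by
  classical
  have hr : M.Reachable z w := h1.trans h2.symm
  obtain ⟨p0⟩ := hr
  obtain ⟨p, hp⟩ : ∃ p : M.Walk z w, p.IsPath := ⟨p0.bypass, p0.bypass_isPath⟩
  have hnd : p.support.Nodup := hp.support_nodup
  have hchain : p.support.Chain' M.Adj := SimpleGraph.Walk.isChain_adj_support p
  have hzl : z ∈ p.support := SimpleGraph.Walk.start_mem_support p
  have hwl : w ∈ p.support := SimpleGraph.Walk.end_mem_support p
  have hlen : 2 ≤ p.support.length := by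
    rcases hl : p.support with _ | ⟨a, _ | ⟨b, rest⟩⟩
    · rw [hl] at hzl; simp at hzl
    · rw [hl] at hzl hwl
      simp at hzl hwl
      exact absurd (hzl.trans hwl.symm) hzw
    · simp
  have hhead : p.support.get ⟨0, by omega⟩ = z := by
    rw [List.get_mk_zero]
    exact SimpleGraph.Walk.head_support p
  have hlast : p.support.get ⟨p.support.length - 1, by omega⟩ = w := by
    rw [List.get_eq_getElem, ← List.getLast_eq_getElem]
    exact SimpleGraph.Walk.getLast_support p
  have hcl := chain_closed htwo hchain hnd hlen
    (by rw [hhead]; exact hz) (by rw [hlast]; exact hw)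
  obtain ⟨q⟩ := h1
  have hxl : x ∈ p.support := walk_mem_of_closed hcl q hzl
  obtain ⟨i, hi⟩ := List.mem_iff_get.1 hxl
  have hi0 : i.val ≠ 0 := by
    intro h
    apply hxz
    have hieq : i = (⟨0, by omega⟩ : Fin p.support.length) := Fin.ext_iff.2 (by simpa using h)
    rw [← hi, hieq, hhead]
  have hiL : i.val ≠ p.support.length - 1 := by
    intro h
    apply hxw
    have hieq : i = (⟨p.support.length - 1, by omega⟩ : Fin p.support.length) :=
      Fin.ext_iff.2 (by simpa using h)
    rw [← hi, hieq, hlast]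
  rw [List.Chain', List.isChain_iff_getElem] at hchain
  have hadj1 : M.Adj (p.support.get ⟨i.val - 1, by omega⟩)
      (p.support.get ⟨i.val - 1 + 1, by omega⟩) :=
    hchain (i.val - 1) (by omega)
  have hfeq : (⟨i.val - 1 + 1, by omega⟩ : Fin p.support.length) = ⟨i.val, i.2⟩ :=
    Fin.ext_iff.2 (by simp; omega)
  rw [hfeq] at hadj1
  have hadj2 : M.Adj (p.support.get ⟨i.val, by omega⟩) (p.support.get ⟨i.val + 1, by omega⟩) :=
    hchain i.val (by omega)
  have hii : p.support.get ⟨i.val, i.2⟩ = x := hi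
  rw [hii] at hadj1 hadj2
  have hne : p.support.get ⟨i.val - 1, by omega⟩ ≠ p.support.get ⟨i.val + 1, by omega⟩ := by
    intro h
    have h2 : i.val - 1 = i.val + 1 := by
      simpa [Fin.ext_iff] using (List.Nodup.get_inj_iff hnd).1 h
    omega
  exact hne (hx _ _ hadj1.symm hadj2)

end VizingKempe
section VizingSwap

variable {V : Type} [Fintype V] {G : SimpleGraph V} {k : ℕ} {f : Sym2 V → Option ℕ}
  {α β : ℕ} {C : Set V}

/-- transposition of `some α` and `some β`. -/
def sig' (α β : ℕ) : Option ℕ → Option ℕ := fun o =>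
  if o = some α then some β else if o = some β then some α else o

theorem sig'_isSome (o : Option ℕ) : (sig' α β o).isSome = o.isSome := by
  unfold sig'; split_ifs <;> simp_all

theorem sig'_a : sig' α β (some α) = some β := if_pos rfl

theorem sig'_b (hab : α ≠ β) : sig' α β (some β) = some α := by
  unfold sig'
  rw [if_neg (fun h => hab (Option.some.inj h).symm), if_pos rfl]

theorem sig'_other {o : Option ℕ} (h1 : o ≠ some α) (h2 : o ≠ some β) :
    sig' α β o = o := by
  unfold sig'
  rw [if_neg h1, if_neg h2]

theorem sig'_sig' (hab : α ≠ β) (o : Option ℕ) : sig' α β (sig' α β o) = o := by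
  by_cases h1 : o = some α
  · rw [h1, sig'_a, sig'_b hab]
  · by_cases h2 : o = some β
    · rw [h2, sig'_b hab, sig'_a]
    · rw [sig'_other h1 h2, sig'_other h1 h2]

/-- The swapped coloring. -/
noncomputable def swp (f : Sym2 V → Option ℕ) (α β : ℕ) (C : Set V) : Sym2 V → Option ℕ := fun e =>
  if (∃ v ∈ C, v ∈ e) then sig' α β (f e) else f e

theorem swp_in {u : V} (hin : u ∈ C) (v : V) :
    swp f α β C s(u,v) = sig' α β (f s(u,v)) :=
  if_pos ⟨u, hin, Sym2.mem_mk_left u v⟩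

theorem swp_out (hf : PC G k f)
    (hcl : ∀ a b, (abG G f α β).Adj a b → a ∈ C → b ∈ C)
    {u : V} (hout : u ∉ C) (v : V) :
    swp f α β C s(u,v) = f s(u,v) := by
  unfold swp
  by_cases hcond : ∃ t ∈ C, t ∈ s(u,v)
  · rw [if_pos hcond]
    obtain ⟨t, htC, hte⟩ := hcond
    rcases Sym2.mem_iff.1 hte with rfl | rfl
    · exact absurd htC hout
    · -- t = v ∈ C
      by_cases hcol : f s(u,t) = some α ∨ f s(u,t) = some β
      · -- then u ∈ C, contradiction
        have hadj : G.Adj u t := by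
          apply (SimpleGraph.mem_edgeSet G).1
          apply hf.1
          rcases hcol with h | h <;> rw [h] <;> rfl
        have : (abG G f α β).Adj t u := ⟨hadj.symm, by rwa [Sym2.eq_swap]⟩
        exact absurd (hcl t u this htC) hout
      · push_neg at hcol
        unfold sig'
        rw [if_neg hcol.1, if_neg hcol.2]
  · rw [if_neg hcond]

theorem swp_PC (hab : α ≠ β) (hf : PC G k f) (hαk : α < k) (hβk : β < k)
    (hcl : ∀ a b, (abG G f α β).Adj a b → a ∈ C → b ∈ C) :
    PC G k (swp f α β C) := by
  classical
  have hsome : ∀ e, ((swp f α β C) e).isSome = (f e).isSome := by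
    intro e
    unfold swp
    split_ifs
    · exact sig'_isSome _
    · rfl
  refine ⟨?_, ?_, ?_⟩
  · intro e he; rw [hsome] at he; exact hf.1 e he
  · intro e b hb
    unfold swp at hb
    split_ifs at hb
    · unfold sig' at hb
      split_ifs at hb with h1 h2
      · cases hb; exact hβk
      · cases hb; exact hαk
      · exact hf.2.1 e b hb
    · exact hf.2.1 e b hb
  · intro u v w hvw hsome'
    by_cases hu : u ∈ C
    · rw [swp_in hu v] at hsome'
      rw [swp_in hu v, swp_in hu w]
      intro heq
      have := congrArg (sig' α β) heq
      rw [sig'_sig' hab, sig'_sig' hab] at this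
      rw [sig'_isSome] at hsome'
      exact hf.2.2 u v w hvw hsome' this
    · rw [swp_out hf hcl hu v] at hsome'
      rw [swp_out hf hcl hu v, swp_out hf hcl hu w]
      exact hf.2.2 u v w hvw hsome'

theorem swp_Miss {e₀ : Sym2 V} (hm : Miss G f e₀) : Miss G (swp f α β C) e₀ := by
  have hsome : ∀ e, ((swp f α β C) e).isSome = (f e).isSome := by
    intro e
    unfold swp
    split_ifs
    · exact sig'_isSome _
    · rfl
  constructor
  · have h0 := hsome e₀
    rw [hm.1] at h0
    simp at h0
    exact Option.not_isSome_iff_eq_none.1 (by rw [h0]; simp)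
  · intro e he hne
    rw [hsome]
    exact hm.2 e he hne

theorem Fr_swp_out (hf : PC G k f)
    (hcl : ∀ a b, (abG G f α β).Adj a b → a ∈ C → b ∈ C)
    {u : V} (hout : u ∉ C) {a : ℕ} (h : Fr f u a) : Fr (swp f α β C) u a := by
  intro w
  rw [swp_out hf hcl hout w]
  exact h w

theorem Fr_swp_in_alpha {u : V} (hin : u ∈ C) (hab : α ≠ β) (h : Fr f u β) :
    Fr (swp f α β C) u α := by
  intro w hw
  rw [swp_in hin] at hw
  unfold sig' at hw
  split_ifs at hw with h1 h2
  · exact hab (Option.some.inj hw).symm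
  · exact h w h2
  · exact h1 hw

theorem Fr_swp_in_other {u : V} (hin : u ∈ C) {a : ℕ} (ha : a ≠ α) (hb : a ≠ β)
    (h : Fr f u a) : Fr (swp f α β C) u a := by
  intro w hw
  rw [swp_in hin] at hw
  unfold sig' at hw
  split_ifs at hw with h1 h2
  · exact hb (Option.some.inj hw).symm
  · exact ha (Option.some.inj hw).symm
  · exact h w hw

end VizingSwap
section VizingExt

variable {V : Type} [Fintype V]

theorem getLast_take' {γ : Type} {l : List γ} {n : ℕ} (hnl : n ≤ l.length)
    (hne : l.take n ≠ []) (hlt : n - 1 < l.length) :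
    (l.take n).getLast hne = l[n-1]'hlt := by
  rw [List.getLast_eq_getElem]
  have h0 : 0 < n := by
    by_contra h
    push_neg at h
    interval_cases n
    simp at hne
  have hlen : (l.take n).length = n := by rw [List.length_take]; omega
  simp only [hlen]
  exact List.getElem_take

theorem vizing_ext' {G : SimpleGraph V} {k : ℕ}
    (hdeg : ∀ v, (G.neighborSet v).ncard < k) {x y₀ : V} (hxy : G.Adj x y₀)
    {f : Sym2 V → Option ℕ} (hf : PC G k f) (hm : Miss G f s(x,y₀)) :
    ∃ g, PC G k g ∧ ∀ e ∈ G.edgeSet, (g e).isSome := by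
  classical
  obtain ⟨α, hαk, hαx⟩ := exists_free hdeg hf x
  set Rel : V → V → Prop := fun a b => ∃ c, f s(x,b) = some c ∧ Fr f a c with hRel
  set FanP : List V → Prop := fun t =>
    (y₀ :: t).Nodup ∧ (∀ y ∈ y₀ :: t, G.Adj x y) ∧ (y₀ :: t).Chain' Rel with hFanP
  have hT0 : FanP [] := ⟨List.nodup_singleton _, by simpa using hxy, List.isChain_singleton _⟩
  have hTfin : {n | ∃ t, FanP t ∧ t.length = n}.Finite := by
    apply Set.Finite.subset (Set.finite_Iic (Fintype.card V))
    rintro n ⟨t, ht, hlen⟩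
    simp only [Set.mem_Iic]
    have := List.Nodup.length_le_card ht.1
    simp only [List.length_cons] at this
    omega
  have hTne : {n | ∃ t, FanP t ∧ t.length = n}.Nonempty := ⟨0, [], hT0, rfl⟩
  obtain ⟨t, hFan, hlen⟩ := Set.Nonempty.csSup_mem hTne hTfin
  have hmax : ∀ t', FanP t' → t'.length ≤ t.length := by
    intro t' h
    rw [hlen]
    exact le_csSup (Set.Finite.bddAbove hTfin) ⟨t', h, rfl⟩
  set L := y₀ :: t with hLdef
  have hLne : L ≠ [] := by simp [hLdef]
  have hnodup : L.Nodup := hFan.1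
  have hadjL : ∀ y ∈ L, G.Adj x y := hFan.2.1
  have hchainL : L.Chain' Rel := hFan.2.2
  have hmhead : Miss G f s(x, L.head hLne) := hm
  set z := L.getLast hLne with hzdef
  have hzL : z ∈ L := List.getLast_mem hLne
  have hadjz : G.Adj x z := hadjL z hzL
  obtain ⟨β, hβk, hβz⟩ := exists_free hdeg hf z
  by_cases hβx : Fr f x β
  · exact rotate_fill hf L hLne hnodup hadjL hchainL hmhead hβk hβx hβz
  obtain ⟨u, hu'⟩ := not_forall.1 hβx
  rw [not_ne_iff] at hu'
  have husome : (f s(x,u)).isSome := by rw [hu']; rfl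
  have hadjxu : G.Adj x u := (SimpleGraph.mem_edgeSet G).1 (hf.1 _ husome)
  have huy₀ : u ≠ y₀ := by
    intro h
    rw [h, hm.1] at hu'
    exact absurd hu' (by simp)
  have huL : u ∈ L := by
    by_contra huL
    have hcons : y₀ :: (t ++ [u]) = L ++ [u] := rfl
    have hFan' : FanP (t ++ [u]) := by
      refine ⟨?_, ?_, ?_⟩
      · rw [hcons, List.nodup_append]
        exact ⟨hnodup, List.nodup_singleton u,
          fun a ha b hb hab => huL ((hab.trans (List.mem_singleton.1 hb)) ▸ ha)⟩
      · intro y hy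
        rw [hcons] at hy
        rcases List.mem_append.1 hy with hy | hy
        · exact hadjL y hy
        · rw [List.mem_singleton.1 hy]; exact hadjxu
      · rw [hcons]
        apply List.isChain_append.2
        refine ⟨hchainL, List.isChain_singleton u, ?_⟩
        intro a ha b hb
        rw [List.getLast?_eq_getLast_of_ne_nil hLne] at ha
        have ha' : a = z := by rw [hzdef]; exact (Option.mem_some_iff.1 ha).symm
        have hb' : b = u := (by simpa using hb : u = b).symm
        rw [ha', hb']
        exact ⟨β, hu', hβz⟩
    have hcontra := hmax _ hFan'
    simp only [List.length_append, List.length_singleton] at hcontra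
    omega
  obtain ⟨j, hj⟩ := List.mem_iff_get.1 huL
  have hjlt : j.val < L.length := j.2
  have hj0 : j.val ≠ 0 := by
    intro h
    apply huy₀
    have hieq : j = (⟨0, by omega⟩ : Fin L.length) := Fin.ext_iff.2 (by simpa using h)
    rw [← hj, hieq]
    rfl
  have hchainget := List.isChain_iff_getElem.1 hchainL
  have hw1 : j.val - 1 < L.length := by omega
  set w := L.get ⟨j.val - 1, hw1⟩ with hwdef
  have hcw : ∃ c, f s(x,u) = some c ∧ Fr f w c := by
    have hrel : Rel (L.get ⟨j.val - 1, by omega⟩) (L.get ⟨j.val - 1 + 1, by omega⟩) :=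
      hchainget (j.val - 1) (by omega)
    have hfeq : (⟨j.val - 1 + 1, by omega⟩ : Fin L.length) = j :=
      Fin.ext_iff.2 (by simp; omega)
    rw [hfeq, hj] at hrel
    exact hrel
  obtain ⟨c, hc, hFrw⟩ := hcw
  have hcβ : c = β := (Option.some.inj (hu'.symm.trans hc)).symm
  have hFrwβ : Fr f w β := by rw [← hcβ]; exact hFrw
  have hwL : w ∈ L := mem_of_get _
  have hadjxw : G.Adj x w := hadjL w hwL
  have hzget : L.get ⟨L.length - 1, by omega⟩ = z := by
    rw [List.get_eq_getElem, hzdef, List.getLast_eq_getElem]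
  have huz : u ≠ z := by
    intro h
    apply hβz x
    rw [Sym2.eq_swap, ← h]
    exact hu'
  have hjlast : j.val ≠ L.length - 1 := by
    intro h
    apply huz
    rw [← hj, ← hzget]
    congr 1
    exact Fin.ext_iff.2 (by simp; omega)
  have hwz : w ≠ z := by
    intro h
    rw [hwdef, ← hzget] at h
    have h2 := (List.Nodup.get_inj_iff hnodup).1 h
    have h3 : j.val - 1 = L.length - 1 := by simpa [Fin.ext_iff] using h2
    omega
  have hxw : x ≠ w := hadjxw.ne
  have hxz : x ≠ z := hadjz.ne
  -- the prefix fan ending at w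
  have hL₁len : (L.take j.val).length = j.val := by rw [List.length_take]; omega
  have hL₁ne : L.take j.val ≠ [] := by
    intro h
    rw [h] at hL₁len
    simp at hL₁len
    omega
  have hL₁head : (L.take j.val).head hL₁ne = y₀ := by
    rw [List.head_eq_getElem_zero, List.getElem_take]
    rfl
  have hL₁last : (L.take j.val).getLast hL₁ne = w := by
    rw [getLast_take' (by omega) hL₁ne (by omega)]
    rw [hwdef, List.get_eq_getElem]
  have hL₁nodup : (L.take j.val).Nodup := List.Nodup.sublist (List.take_sublist _ _) hnodup
  have hL₁adj : ∀ y ∈ L.take j.val, G.Adj x y := fun y hy =>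
    hadjL y (List.take_subset _ _ hy)
  have hL₁chain : (L.take j.val).Chain' Rel := hchainL.take _
  have hmhead₁ : Miss G f s(x, (L.take j.val).head hL₁ne) := by rw [hL₁head]; exact hm
  by_cases hαw : Fr f w α
  · apply rotate_fill hf (L.take j.val) hL₁ne hL₁nodup hL₁adj hL₁chain hmhead₁ hαk hαx
    rw [hL₁last]
    exact hαw
  by_cases hαz : Fr f z α
  · exact rotate_fill hf L hLne hnodup hadjL hchainL hmhead hαk hαx hαz
  have hαβ : α ≠ β := fun h => hβx (h ▸ hαx)
  set M := abG G f α β with hM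
  have htwo : ∀ v a b c' : V, a ≠ b → M.Adj v a → M.Adj v b → M.Adj v c' → c' = a ∨ c' = b :=
    fun v a b c' hab ha hb hc' => abG_two hf hab ha hb hc'
  have hxU : ∀ a b, M.Adj x a → M.Adj x b → a = b := abG_unique hf (Or.inl hαx)
  have hzU : ∀ a b, M.Adj z a → M.Adj z b → a = b := abG_unique hf (Or.inr hβz)
  have hwU : ∀ a b, M.Adj w a → M.Adj w b → a = b := abG_unique hf (Or.inr hFrwβ)
  have hdich : ¬(M.Reachable z x ∧ M.Reachable w x) := fun h =>
    no_three htwo hxU hzU hwU (fun hh => hwz hh.symm) hxz hxw h.1 h.2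
  by_cases hrw : M.Reachable w x
  · -- Case B : swap the component of z, rotate the full fan
    have hrz : ¬ M.Reachable z x := fun h => hdich ⟨h, hrw⟩
    set C : Set V := {v | M.Reachable z v} with hC
    have hcl : ∀ a b, M.Adj a b → a ∈ C → b ∈ C := fun a b hab ha =>
      ha.trans ⟨hab.toWalk⟩
    have hxC : x ∉ C := hrz
    have hwC : w ∉ C := fun h => hrz (SimpleGraph.Reachable.trans h hrw)
    have hzC : z ∈ C := SimpleGraph.Reachable.refl z
    have hgPC : PC G k (swp f α β C) := swp_PC hαβ hf hαk hβk hcl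
    have hgx : ∀ v', swp f α β C s(x,v') = f s(x,v') := swp_out hf hcl hxC
    have hgm : Miss G (swp f α β C) s(x, L.head hLne) := swp_Miss hm
    have hchain' : L.Chain' (fun a b => ∃ c', swp f α β C s(x,b) = some c' ∧
        Fr (swp f α β C) a c') := by
      rw [List.Chain', List.isChain_iff_getElem]
      intro i hi
      obtain ⟨c', hc', hFr'⟩ := hchainget i hi
      refine ⟨c', by rw [hgx]; exact hc', ?_⟩
      by_cases hmem : L.get ⟨i, by omega⟩ ∈ C
      · have hc'α : c' ≠ α := fun h => hαx _ (h ▸ hc')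
        have hc'β : c' ≠ β := by
          intro h
          have hequ : L.get ⟨i+1, by omega⟩ = u := by
            by_contra hnequ
            exact hf.2.2 x _ u hnequ (by rw [List.get_eq_getElem, hc']; rfl) (by rw [List.get_eq_getElem, hc', h, hu'])
          have hfin : (⟨i+1, by omega⟩ : Fin L.length) = j :=
            (List.Nodup.get_inj_iff hnodup).1 (hequ.trans hj.symm)
          have hij : i + 1 = j.val := by simpa [Fin.ext_iff] using hfin
          have hiw : L.get ⟨i, by omega⟩ = w := by
            rw [hwdef]
            congr 1
            exact Fin.ext_iff.2 (by simp; omega)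
          exact hwC (hiw ▸ hmem)
        exact Fr_swp_in_other hmem hc'α hc'β hFr'
      · exact Fr_swp_out hf hcl hmem hFr'
    apply rotate_fill hgPC L hLne hnodup hadjL hchain' hgm hαk
    · exact Fr_swp_out hf hcl hxC hαx
    · exact Fr_swp_in_alpha hzC hαβ hβz
  · -- Case A : swap the component of w, rotate the prefix fan
    set C : Set V := {v | M.Reachable w v} with hC
    have hcl : ∀ a b, M.Adj a b → a ∈ C → b ∈ C := fun a b hab ha =>
      ha.trans ⟨hab.toWalk⟩
    have hxC : x ∉ C := hrw
    have hwC : w ∈ C := SimpleGraph.Reachable.refl w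
    have hgPC : PC G k (swp f α β C) := swp_PC hαβ hf hαk hβk hcl
    have hgx : ∀ v', swp f α β C s(x,v') = f s(x,v') := swp_out hf hcl hxC
    have hgm : Miss G (swp f α β C) s(x, (L.take j.val).head hL₁ne) := by
      rw [hL₁head]
      exact swp_Miss hm
    have hchain' : (L.take j.val).Chain' (fun a b => ∃ c', swp f α β C s(x,b) = some c' ∧
        Fr (swp f α β C) a c') := by
      rw [List.Chain', List.isChain_iff_getElem]
      intro i hi
      obtain ⟨c', hc', hFr'⟩ := List.isChain_iff_getElem.1 hL₁chain i hi
      refine ⟨c', by rw [hgx]; exact hc', ?_⟩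
      have hgetb : (L.take j.val).get ⟨i+1, by omega⟩ = L.get ⟨i+1, by rw [hL₁len] at hi; omega⟩ := by
        rw [List.get_eq_getElem, List.get_eq_getElem]
        exact List.getElem_take
      have hc'β : c' ≠ β := by
        intro h
        have hequ : (L.take j.val).get ⟨i+1, by omega⟩ = u := by
          by_contra hnequ
          exact hf.2.2 x _ u hnequ (by rw [List.get_eq_getElem, hc']; rfl) (by rw [List.get_eq_getElem, hc', h, hu'])
        rw [hgetb] at hequ
        have hfin : (⟨i+1, by rw [hL₁len] at hi; omega⟩ : Fin L.length) = j :=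
          (List.Nodup.get_inj_iff hnodup).1 (hequ.trans hj.symm)
        have hij : i + 1 = j.val := by simpa [Fin.ext_iff] using hfin
        rw [hL₁len] at hi
        omega
      have hc'α : c' ≠ α := fun h => hαx _ (h ▸ hc')
      by_cases hmem : (L.take j.val).get ⟨i, by omega⟩ ∈ C
      · exact Fr_swp_in_other hmem hc'α hc'β hFr'
      · exact Fr_swp_out hf hcl hmem hFr'
    apply rotate_fill hgPC (L.take j.val) hL₁ne hL₁nodup hL₁adj hchain' hgm hαk
    · exact Fr_swp_out hf hcl hxC hαx
    · rw [hL₁last]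
      exact Fr_swp_in_alpha hwC hαβ hFrwβ

end VizingExt
theorem vizing_all (G : SimpleGraph V) (k : ℕ) (hdeg : ∀ v, (G.neighborSet v).ncard < k) :
    ∃ g, PC G k g ∧ ∀ e ∈ G.edgeSet, (g e).isSome := by
  classical
  obtain ⟨n, hn⟩ : ∃ n, G.edgeSet.ncard = n := ⟨_, rfl⟩
  induction n using Nat.strong_induction_on generalizing G with
  | _ n ih =>
    by_cases he : G.edgeSet = ∅
    · exact ⟨fun _ => none, ⟨by simp, by simp, by simp⟩, fun e hee => by rw [he] at hee; simp at hee⟩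
    · obtain ⟨e₀, he₀⟩ := Set.nonempty_iff_ne_empty.2 he
      obtain ⟨x, y₀, hxy, rfl⟩ : ∃ x y₀, G.Adj x y₀ ∧ s(x,y₀) = e₀ := by
        induction e₀ with
        | _ a b => exact ⟨a, b, he₀, rfl⟩
      set G' := G.deleteEdges {s(x,y₀)} with hG'
      have hsub : G'.edgeSet ⊆ G.edgeSet := by
        rw [hG', SimpleGraph.edgeSet_deleteEdges]; exact Set.diff_subset
      have hG'E : G'.edgeSet = G.edgeSet \ {s(x,y₀)} := by
        rw [hG', SimpleGraph.edgeSet_deleteEdges]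
      have hfin : G.edgeSet.Finite := Set.toFinite _
      have hlt : G'.edgeSet.ncard < n := by
        rw [hG'E, ← hn]
        exact Set.ncard_diff_singleton_lt_of_mem he₀ hfin
      have hdeg' : ∀ v, (G'.neighborSet v).ncard < k := fun v =>
        lt_of_le_of_lt (Set.ncard_le_ncard (fun w hw => by
          have : G'.Adj v w := hw
          exact (SimpleGraph.deleteEdges_le _ : G' ≤ G) this) (Set.toFinite _)) (hdeg v)
      obtain ⟨f, hf, hftot⟩ := ih _ hlt G' hdeg' rfl
      have hfPC : PC G k f := ⟨fun e hee => hsub (hf.1 e hee), hf.2.1, hf.2.2⟩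
      have hmiss : Miss G f s(x,y₀) := by
        constructor
        · by_contra h
          have : (f s(x,y₀)).isSome := by
            cases hfs : f s(x,y₀) with
            | none => exact absurd hfs h
            | some a => simp
          have := hf.1 _ this
          rw [hG'E] at this
          exact this.2 rfl
        · intro e heE hne
          exact hftot e (by rw [hG'E]; exact ⟨heE, hne⟩)
      exact vizing_ext' hdeg hxy hfPC hmiss

end VizingAux
section VizingAux2

variable {V : Type} [Fintype V]

theorem chromIndex_le_of_PC {G : SimpleGraph V} {k : ℕ} {f : Sym2 V → Option ℕ}
    (hf : PC G k f) (htot : ∀ e ∈ G.edgeSet, (f e).isSome) : chromIndex G ≤ k := by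
  apply Nat.sInf_le
  refine ⟨fun e => ⟨(f e).getD 0, ?_⟩, ?_⟩
  · obtain ⟨a, ha⟩ := Option.isSome_iff_exists.1 (htot e e.2)
    rw [ha]; exact hf.2.1 e a ha
  · rintro e₁ e₂ hne ⟨v, hv1, hv2⟩ hceq
    obtain ⟨b₁, hb₁⟩ := Sym2.mem_iff_exists.1 hv1
    obtain ⟨b₂, hb₂⟩ := Sym2.mem_iff_exists.1 hv2
    have hb : b₁ ≠ b₂ := by
      intro h; apply hne; apply Subtype.ext; rw [hb₁, hb₂, h]
    have h1 : (f s(v,b₁)).isSome := by rw [← hb₁]; exact htot _ e₁.2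
    have hne' := hf.2.2 v b₁ b₂ hb h1
    rw [← hb₁, ← hb₂] at hne'
    obtain ⟨a₁, ha₁⟩ := Option.isSome_iff_exists.1 (htot _ e₁.2)
    obtain ⟨a₂, ha₂⟩ := Option.isSome_iff_exists.1 (htot _ e₂.2)
    apply hne'
    rw [ha₁, ha₂]
    have : ((f ↑e₁).getD 0) = ((f ↑e₂).getD 0) := congrArg Fin.val hceq
    rw [ha₁, ha₂] at this
    simpa using this

theorem exists_coloring (G : SimpleGraph V) :
    ∃ c : G.edgeSet → Fin (chromIndex G), ∀ e₁ e₂ : G.edgeSet, e₁ ≠ e₂ →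
      (∃ v, v ∈ (e₁ : Sym2 V) ∧ v ∈ (e₂ : Sym2 V)) → c e₁ ≠ c e₂ := by
  classical
  have : Finite G.edgeSet := Set.toFinite _
  have hfin : Fintype G.edgeSet := Fintype.ofFinite _
  have hne : {k | ∃ c : G.edgeSet → Fin k, ∀ e₁ e₂ : G.edgeSet, e₁ ≠ e₂ →
      (∃ v, v ∈ (e₁ : Sym2 V) ∧ v ∈ (e₂ : Sym2 V)) → c e₁ ≠ c e₂}.Nonempty := by
    refine ⟨Fintype.card G.edgeSet, (Fintype.equivFin G.edgeSet), fun e₁ e₂ hne _ hc => hne ?_⟩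
    exact (Fintype.equivFin G.edgeSet).injective hc
  exact Nat.sInf_mem hne

theorem maxDeg_le_chromIndex (G : SimpleGraph V) : maxDeg G ≤ chromIndex G := by
  classical
  obtain ⟨c, hc⟩ := exists_coloring G
  apply Finset.sup_le
  intro v _
  have : Function.Injective (fun w : G.neighborSet v =>
      c ⟨s(v, (w : V)), (by exact w.2 : G.Adj v w)⟩) := by
    intro w₁ w₂ h
    by_contra hne
    have hne' : (⟨s(v, (w₁ : V)), w₁.2⟩ : G.edgeSet) ≠ ⟨s(v, (w₂ : V)), w₂.2⟩ := by
      intro hh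
      apply hne; apply Subtype.ext
      have := congrArg Subtype.val hh
      exact (Sym2.congr_right.1 this)
    exact hc _ _ hne' ⟨v, by simp, by simp⟩ h
  calc (G.neighborSet v).ncard = Nat.card (G.neighborSet v) := rfl
    _ ≤ Nat.card (Fin (chromIndex G)) := Nat.card_le_card_of_injective _ this
    _ = chromIndex G := by simp

theorem chromIndex_le_maxDeg_add_one (G : SimpleGraph V) :
    chromIndex G ≤ maxDeg G + 1 := by
  obtain ⟨g, hg, htot⟩ := vizing_all G (maxDeg G + 1)
    (fun v => by unfold maxDeg; exact Nat.lt_succ_of_le (Finset.le_sup (f := fun v => (G.neighborSet v).ncard) (Finset.mem_univ v)))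
  exact chromIndex_le_of_PC hg htot

theorem chromIndex_of_empty {G : SimpleGraph V} (h : G.edgeSet = ∅) : chromIndex G = 0 := by
  have : (0 : ℕ) ∈ {k | ∃ c : G.edgeSet → Fin k, ∀ e₁ e₂ : G.edgeSet, e₁ ≠ e₂ →
      (∃ v, v ∈ (e₁ : Sym2 V) ∧ v ∈ (e₂ : Sym2 V)) → c e₁ ≠ c e₂} := by
    refine ⟨fun e => (Set.eq_empty_iff_forall_notMem.mp h _ e.2).elim,
      fun e₁ => (Set.eq_empty_iff_forall_notMem.mp h _ e₁.2).elim⟩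
  exact Nat.eq_zero_of_le_zero (Nat.sInf_le this)

theorem maxDeg_induce_le (G : SimpleGraph V) (s : Set V) [Fintype ↥s] :
    maxDeg (G.induce s) ≤ maxDeg G := by
  unfold maxDeg
  apply Finset.sup_le
  intro v _
  have h1 : ((G.induce s).neighborSet v).ncard ≤ (G.neighborSet (v : V)).ncard :=
    Set.ncard_le_ncard_of_injOn (fun w => (w : V)) (fun w hw => hw)
      (fun w₁ _ w₂ _ h => Subtype.ext h) (Set.toFinite _)
  exact le_trans h1 (Finset.le_sup (f := fun v => (G.neighborSet v).ncard) (Finset.mem_univ _))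

theorem edgeSet_induce_univ_compl [DecidableEq V] (G : SimpleGraph V) :
    (G.induce (↑(Finset.univ : Finset V)ᶜ : Set V)).edgeSet = ∅ := by
  ext e
  simp only [Set.mem_empty_iff_false, iff_false]
  intro he
  induction e with
  | _ a b =>
    have := a.2
    simp at this

end VizingAux2
/-- if `G` is class 2, then `vs_{χ'}(G) = min (vs_Δ(G)) (vs_class(G))`. -/
theorem vsChi_eq_min_of_class_two {V : Type} [Fintype V] [DecidableEq V]
    (G : SimpleGraph V) (h2 : chromIndex G = maxDeg G + 1) :
    vsChi G = min (vsDelta G) (vsClass G) := by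
  classical
  have hne : G.edgeSet ≠ ∅ := by
    intro h
    rw [chromIndex_of_empty h] at h2
    omega
  rw [vsChi, if_neg hne, vsDelta, vsClass]
  set C : Set ℕ := {n | ∃ S : Finset V, S.card = n ∧
      chromIndex (G.induce (↑Sᶜ : Set V)) ≠ chromIndex G} with hC
  set A : Set ℕ := {n | ∃ S : Finset V, S.card = n ∧
      (maxDeg (G.induce (↑Sᶜ : Set V)) ≠ maxDeg G ∨
        (G.induce (↑Sᶜ : Set V)).edgeSet = ∅)} with hA
  set B : Set ℕ := {n | ∃ S : Finset V, S.card = n ∧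
      (classInv (G.induce (↑Sᶜ : Set V)) ≠ classInv G ∨
        (G.induce (↑Sᶜ : Set V)).edgeSet = ∅)} with hB
  have hCuniv : (Finset.univ : Finset V).card ∈ C := by
    refine ⟨Finset.univ, rfl, ?_⟩
    rw [chromIndex_of_empty (edgeSet_induce_univ_compl G), h2]
    omega
  have hAuniv : (Finset.univ : Finset V).card ∈ A :=
    ⟨Finset.univ, rfl, Or.inr (edgeSet_induce_univ_compl G)⟩
  have hBuniv : (Finset.univ : Finset V).card ∈ B :=
    ⟨Finset.univ, rfl, Or.inr (edgeSet_induce_univ_compl G)⟩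
  have hCA : sInf C ≤ sInf A := by
    obtain ⟨S, hcard, hS⟩ := Nat.sInf_mem ⟨_, hAuniv⟩
    refine Nat.sInf_le ⟨S, hcard, ?_⟩
    rcases hS with hS | hS
    · have h1 := maxDeg_induce_le G (↑Sᶜ : Set V)
      have h3 := chromIndex_le_maxDeg_add_one (G.induce (↑Sᶜ : Set V))
      omega
    · rw [chromIndex_of_empty hS, h2]
      omega
  have hCB : sInf C ≤ sInf B := by
    obtain ⟨S, hcard, hS⟩ := Nat.sInf_mem ⟨_, hBuniv⟩
    refine Nat.sInf_le ⟨S, hcard, ?_⟩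
    rcases hS with hS | hS
    · have h1 := maxDeg_induce_le G (↑Sᶜ : Set V)
      have h3 := chromIndex_le_maxDeg_add_one (G.induce (↑Sᶜ : Set V))
      have h4 := maxDeg_le_chromIndex (G.induce (↑Sᶜ : Set V))
      rw [classInv, classInv, h2] at hS
      omega
    · rw [chromIndex_of_empty hS, h2]
      omega
  have hmin : min (sInf A) (sInf B) ≤ sInf C := by
    obtain ⟨S, hcard, hS⟩ := Nat.sInf_mem ⟨_, hCuniv⟩
    by_cases hd : maxDeg (G.induce (↑Sᶜ : Set V)) = maxDeg G
    · refine le_trans (min_le_right _ _) (Nat.sInf_le ⟨S, hcard, Or.inl ?_⟩)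
      have h3 := chromIndex_le_maxDeg_add_one (G.induce (↑Sᶜ : Set V))
      have h4 := maxDeg_le_chromIndex (G.induce (↑Sᶜ : Set V))
      rw [classInv, classInv, h2]
      rw [h2] at hS
      omega
    · exact le_trans (min_le_left _ _) (Nat.sInf_le ⟨S, hcard, Or.inl hd⟩)
  exact le_antisymm (le_min hCA hCB) hmin
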